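/- Let Y = Adj(X, x_j, A_j, a_j) be a shrinking adjunction space and y₀ ∈ X. If (X, y₀) is sequentially 0-connected and (A_j, a_j) is sequentially 0-connected for every j ∈ ℕ, then (Y, y₀) is sequentially 0-connected. -/

import Mathlib

set_option linter.unusedSectionVars false

open Set Filter Topology

namespace ShrinkingAdjunction

variable (X : Type*) [TopologicalSpace X] (A : ℕ → Type*) [∀ j, TopologicalSpace (A j)]
  (x : ℕ → X) (a : ∀ j, A j)

/-- Gluing relation for the `k`-th finite adjunction space on the carrier `X ⊕ Σ j, A j`:
for `j < k` the copy of `A j` is attached to `x j` along its basepoint `a j`, and for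
`j ≥ k` the copy of `A j` is collapsed entirely to `x j`. -/
def rel (k : ℕ) : (X ⊕ Σ j : ℕ, A j) → (X ⊕ Σ j : ℕ, A j) → Prop := fun p q =>
  ∃ j b, (j < k → b = a j) ∧
    ((p = Sum.inl (x j) ∧ q = Sum.inr ⟨j, b⟩) ∨ (q = Sum.inl (x j) ∧ p = Sum.inr ⟨j, b⟩))

/-- The `k`-th finite adjunction space `Y_k`, with the quotient (weak) topology. -/
def FinAdj (k : ℕ) : Type _ := Quot (rel X A x a k)

instance (k : ℕ) : TopologicalSpace (FinAdj X A x a k) :=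
  inferInstanceAs (TopologicalSpace (Quot _))

/-- The bonding retraction `ρ_{k+1,k} : Y_{k+1} → Y_k`, collapsing `A_{k+1}` to `x_{k+1}`. -/
def bond (k : ℕ) : FinAdj X A x a (k + 1) → FinAdj X A x a k :=
  Quot.lift (Quot.mk _) fun p q h =>
    Quot.sound (by
      obtain ⟨j, b, hj, hpq⟩ := h
      exact ⟨j, b, fun h' => hj (Nat.lt_succ_of_lt h'), hpq⟩)

/-- The shrinking adjunction space `Adj(X, x_j, A_j, a_j)`: the inverse limit of the finite
adjunction spaces `Y_k`, topologized as a subspace of the product `∏ k, Y_k`. -/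
def ShrAdj : Type _ :=
  {y : ∀ k, FinAdj X A x a k // ∀ k, bond X A x a k (y (k + 1)) = y k}

instance : TopologicalSpace (ShrAdj X A x a) :=
  inferInstanceAs (TopologicalSpace
    {y : ∀ k, FinAdj X A x a k // ∀ k, bond X A x a k (y (k + 1)) = y k})

/-- Canonical inclusion of the core `X` into the shrinking adjunction space. -/
def inclX : C(X, ShrAdj X A x a) :=
  ⟨fun z => ⟨fun _ => Quot.mk _ (Sum.inl z), fun _ => rfl⟩, by
    apply Continuous.subtype_mk
    exact continuous_pi fun k => continuous_quot_mk.comp continuous_inl⟩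

/-- Canonical inclusion of the attachment space `A j`. -/
def inclA (j : ℕ) : C(A j, ShrAdj X A x a) :=
  ⟨fun b => ⟨fun _ => Quot.mk _ (Sum.inr ⟨j, b⟩), fun _ => rfl⟩, by
    apply Continuous.subtype_mk
    exact continuous_pi fun k => continuous_quot_mk.comp (continuous_inr.comp continuous_sigmaMk)⟩

/-- The map on the carrier which collapses every attachment space to its attachment point. -/
def coreMap : (X ⊕ Σ j : ℕ, A j) → X := Sum.elim id fun p => x p.1

theorem coreMap_rel (k : ℕ) :
    ∀ p q, rel X A x a k p q → coreMap X A x p = coreMap X A x q := by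
  rintro p q ⟨j, b, -, ⟨rfl, rfl⟩ | ⟨rfl, rfl⟩⟩ <;> rfl

/-- The canonical retraction `r : Y → X` collapsing every `A j` to `x j`. -/
def retrCore : C(ShrAdj X A x a, X) :=
  ⟨fun y => Quot.lift (coreMap X A x) (coreMap_rel X A x a 0) (y.1 0),
    (continuous_quot_lift _
        (continuous_id.sumElim (continuous_sigma fun i => (continuous_const : Continuous fun _ : A i => x i)))).comp
      ((continuous_apply 0).comp continuous_subtype_val)⟩

/-- The map on the carrier collapsing everything except the copy of `A j` to `a j`. -/
def projMap (j : ℕ) : (X ⊕ Σ i : ℕ, A i) → A j :=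
  Sum.elim (fun _ => a j) fun p => if h : p.1 = j then h ▸ p.2 else a j

theorem projMap_rel (j : ℕ) :
    ∀ p q, rel X A x a (j + 1) p q → projMap X A a j p = projMap X A a j q := by
  rintro p q ⟨i, b, hib, ⟨rfl, rfl⟩ | ⟨rfl, rfl⟩⟩ <;>
  · simp only [projMap, Sum.elim_inl, Sum.elim_inr]
    rcases eq_or_ne i j with rfl | h
    · rw [dif_pos rfl]
      first
      | exact (hib (Nat.lt_succ_self i))
      | exact (hib (Nat.lt_succ_self i)).symm
    · rw [dif_neg h]

theorem projMap_continuous (j : ℕ) : Continuous (projMap X A a j) := by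
  refine Continuous.sumElim continuous_const (continuous_sigma fun i => ?_)
  rcases eq_or_ne i j with rfl | h
  · simp only [dif_pos rfl]
    exact continuous_id
  · simp only [dif_neg h]
    exact continuous_const

/-- The canonical retraction `r_j : Y → A j` collapsing the rest of `Y` to `a j`. -/
def retrA (j : ℕ) : C(ShrAdj X A x a, A j) :=
  ⟨fun y => Quot.lift (projMap X A a j) (projMap_rel X A x a j) (y.1 (j + 1)),
    (continuous_quot_lift _ (projMap_continuous X A a j)).comp
      ((continuous_apply (j + 1)).comp continuous_subtype_val)⟩

end ShrinkingAdjunction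

open ShrinkingAdjunction

/-- A countable family of maps clusters at (converges toward) a point. -/
def ClustersAt {K Z W : Type*} [TopologicalSpace Z] [TopologicalSpace W]
    (f : K → C(Z, W)) (w : W) : Prop :=
  ∀ U ∈ nhds w, {k : K | ¬ Set.range (f k) ⊆ U}.Finite

/-- `(Z, z)` is sequentially 0-connected: every sequence `z_k → z` admits a sequence of
paths from `z` to `z_k` converging to `z`. -/
def SeqZeroConnectedAt (Z : Type*) [TopologicalSpace Z] (z : Z) : Prop :=
  ∀ u : ℕ → Z, Filter.Tendsto u Filter.atTop (nhds z) →
    ∃ α : ℕ → C(unitInterval, Z), (∀ k, α k 0 = z ∧ α k 1 = u k) ∧ ClustersAt α z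

/-!
Every point of `Y` lies in the core `X` or in one attached `A j`. A path from `y₀` to `u k`
therefore follows a path in `X` from `y₀` to `r (u k)` and, when `u k ∈ A j`, continues along a
path in `A j` from `a j` to `r_j (u k)`. These paths converge to `y₀`: the `X`-parts by the
hypothesis on `X`, the `A j`-parts for the finitely many small `j` by the hypothesis on `A j`, and
for large `j` because the `A j` shrink: a neighbourhood of `y₀` in the inverse limit constrains only
finitely many levels, at which `A j` is collapsed to `x j`.
-/

theorem clustersAt_iff_tendsto_smallSets {K Z W : Type*} [TopologicalSpace Z]
    [TopologicalSpace W] (f : K → C(Z, W)) (w : W) :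
    ClustersAt f w ↔ Tendsto (fun k => range (f k)) cofinite (𝓝 w).smallSets := by
  simp only [ClustersAt, tendsto_smallSets_iff, eventually_cofinite]

theorem seqZeroConnectedAt_iff {Z : Type*} [TopologicalSpace Z] (z : Z) :
    SeqZeroConnectedAt Z z ↔ ∀ u : ℕ → Z, Tendsto u atTop (𝓝 z) →
      ∃ γ : ∀ k, Path z (u k), Tendsto (fun k => range (γ k)) atTop (𝓝 z).smallSets := by
  simp only [SeqZeroConnectedAt, clustersAt_iff_tendsto_smallSets, Nat.cofinite_eq_atTop]
  refine forall₂_congr fun u _ => ⟨?_, ?_⟩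
  · rintro ⟨α, hα, hlim⟩
    exact ⟨fun k => ⟨α k, (hα k).1, (hα k).2⟩, hlim⟩
  · rintro ⟨γ, hlim⟩
    exact ⟨fun k => (γ k).toContinuousMap, fun k => ⟨(γ k).source, (γ k).target⟩, hlim⟩

theorem Filter.Tendsto.union_smallSets {α β : Type*} {la : Filter α} {lb : Filter β}
    {s t : α → Set β} (hs : Tendsto s la lb.smallSets) (ht : Tendsto t la lb.smallSets) :
    Tendsto (fun i => s i ∪ t i) la lb.smallSets := by
  rw [tendsto_smallSets_iff] at hs ht ⊢
  exact fun U hU => ((hs U hU).and (ht U hU)).mono fun _ h => union_subset h.1 h.2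

theorem exists_nhds_forall_eq_of_le_mem {Y : ℕ → Type*} [∀ k, TopologicalSpace (Y k)]
    {y : ∀ k, Y k} {U : Set (∀ k, Y k)} (hU : U ∈ 𝓝 y) :
    ∃ N, ∃ C ∈ 𝓝 y, ∀ y' ∈ C, ∀ z : ∀ k, Y k, (∀ m ≤ N, z m = y' m) → z ∈ U := by
  rw [nhds_pi, Filter.mem_pi] at hU
  obtain ⟨I, hI, t, ht, hIt⟩ := hU
  obtain ⟨N, hN⟩ := hI.bddAbove
  exact ⟨N, I.pi t, set_pi_mem_nhds hI fun m _ => ht m,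
    fun y' hy' z hz => hIt fun m hm => (hz m (hN hm)).symm ▸ hy' m hm⟩

namespace ShrinkingAdjunction

variable {X : Type*} [TopologicalSpace X] {A : ℕ → Type*} [∀ j, TopologicalSpace (A j)]
  {x : ℕ → X} {a : ∀ j, A j}

theorem mk_inr_eq_mk_inl {k j : ℕ} {b : A j} (h : j < k → b = a j) :
    Quot.mk (rel X A x a k) (Sum.inr ⟨j, b⟩) = Quot.mk _ (Sum.inl (x j)) :=
  Quot.sound ⟨j, b, h, Or.inr ⟨rfl, rfl⟩⟩

theorem mk_eq_mk_inl_coreMap {k : ℕ} {p : X ⊕ Σ j, A j}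
    (hp : ∀ j b, j < k → p = Sum.inr ⟨j, b⟩ → b = a j) :
    Quot.mk (rel X A x a k) p = Quot.mk _ (Sum.inl (coreMap X A x p)) := by
  rcases p with z | ⟨j, b⟩
  · rfl
  · exact mk_inr_eq_mk_inl fun hj => hp j b hj rfl

theorem projMap_inr_self (j : ℕ) (b : A j) : projMap X A a j (Sum.inr ⟨j, b⟩) = b :=
  dif_pos rfl

theorem eq_inr_of_projMap_ne {j : ℕ} {p : X ⊕ Σ i, A i} (h : projMap X A a j p ≠ a j) :
    p = Sum.inr ⟨j, projMap X A a j p⟩ := by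
  rcases p with z | ⟨i, b⟩
  · exact absurd rfl h
  · rcases eq_or_ne i j with rfl | hij
    · rw [projMap_inr_self]
    · simp only [projMap, Sum.elim_inr, dif_neg hij] at h
      exact absurd rfl h

theorem projMap_rel_of_lt {j k : ℕ} (hjk : j < k) :
    ∀ p q, rel X A x a k p q → projMap X A a j p = projMap X A a j q := by
  rintro p q ⟨i, b, hib, ⟨rfl, rfl⟩ | ⟨rfl, rfl⟩⟩ <;>
  · rcases eq_or_ne i j with rfl | hij
    · simp [projMap, hib hjk]
    · simp [projMap, hij]

theorem ShrAdj.apply_eq_mk_of_le (y : ShrAdj X A x a) {k m : ℕ} (hkm : k ≤ m)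
    {p : X ⊕ Σ j, A j} (hm : y.1 m = Quot.mk _ p) : y.1 k = Quot.mk _ p := by
  induction m, hkm using Nat.le_induction with
  | base => exact hm
  | succ m _ ih => exact ih (by rw [← y.2 m, hm]; rfl)

theorem inclA_apply_of_le {j m : ℕ} (hmj : m ≤ j) (b : A j) :
    (inclA X A x a j b).1 m = (inclX X A x a (x j)).1 m :=
  mk_inr_eq_mk_inl fun h => absurd h (not_lt.2 hmj)

theorem inclA_basepoint (j : ℕ) : inclA X A x a j (a j) = inclX X A x a (x j) :=
  Subtype.ext <| funext fun _ => mk_inr_eq_mk_inl fun _ => rfl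

theorem retrA_inclA (j : ℕ) (b : A j) : retrA X A x a j (inclA X A x a j b) = b :=
  projMap_inr_self (X := X) j b

theorem ShrAdj.mem_range_inclX_or_inclA (y : ShrAdj X A x a) :
    y ∈ range (inclX X A x a) ∨ ∃ j, y ∈ range (inclA X A x a j) := by
  by_cases hA : ∃ k j b, j < k ∧ b ≠ a j ∧ y.1 k = Quot.mk _ (Sum.inr ⟨j, b⟩)
  · obtain ⟨k, j, b, hjk, hb, hk⟩ := hA
    refine Or.inr ⟨j, b, Subtype.ext <| funext fun m => ?_⟩
    rcases le_total m k with hmk | hkm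
    · exact (y.apply_eq_mk_of_le hmk hk).symm
    · -- `projMap j` survives down to level `k`, where it reads off `b ≠ a j`
      have hproj : projMap X A a j (y.1 m).out = b := by
        have hmk := y.apply_eq_mk_of_le hkm (Quot.out_eq (y.1 m)).symm
        rw [hk] at hmk
        exact (congrArg (Quot.lift _ (projMap_rel_of_lt hjk)) hmk).symm.trans
          (projMap_inr_self j b)
      have hp := eq_inr_of_projMap_ne (hproj ▸ hb)
      rw [hproj] at hp
      rw [← Quot.out_eq (y.1 m), hp]
      rfl
  · push Not at hA
    refine Or.inl ⟨retrCore X A x a y, Subtype.ext <| funext fun k => ?_⟩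
    obtain ⟨p, hp⟩ := Quot.exists_rep (y.1 k)
    have hcore : coreMap X A x p = retrCore X A x a y := by
      change _ = Quot.lift _ _ (y.1 0)
      rw [y.apply_eq_mk_of_le (Nat.zero_le k) hp.symm]
    rw [← hcore, ← hp, mk_eq_mk_inl_coreMap fun j b hjk hpb => by_contra fun hb =>
      hA k j b hjk hb (hpb ▸ hp.symm)]
    rfl

theorem exists_path_range_subset (y₀ : X) (y : ShrAdj X A x a)
    (β : Path y₀ (retrCore X A x a y)) (γ : ∀ j, Path (a j) (retrA X A x a j y)) :
    ∃ α : Path (inclX X A x a y₀) y, range α ⊆ inclX X A x a '' range β ∪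
      ⋃ j, ⋃ (_ : retrCore X A x a y = x j), inclA X A x a j '' range (γ j) := by
  rcases y.mem_range_inclX_or_inclA with ⟨z, rfl⟩ | ⟨j, b, rfl⟩
  · refine ⟨(β.map (inclX X A x a).continuous).cast rfl rfl, ?_⟩
    rintro _ ⟨t, rfl⟩
    exact Or.inl ⟨β t, ⟨t, rfl⟩, rfl⟩
  · let γ' : Path (inclX X A x a (x j)) (inclA X A x a j b) :=
      ((γ j).map (inclA X A x a j).continuous).cast (inclA_basepoint j).symm
        (by rw [retrA_inclA])
    refine ⟨(β.map (inclX X A x a).continuous).trans γ', ?_⟩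
    refine (Path.trans_range _ _).subset.trans (union_subset_union ?_ ?_)
    · rintro _ ⟨t, rfl⟩
      exact ⟨β t, ⟨t, rfl⟩, rfl⟩
    · rintro _ ⟨t, rfl⟩
      exact mem_iUnion₂_of_mem (i := j) rfl ⟨γ j t, ⟨t, rfl⟩, rfl⟩

theorem exists_nhds_eventually_range_inclA_subset {y₀ : X} {U : Set (ShrAdj X A x a)}
    (hU : U ∈ 𝓝 (inclX X A x a y₀)) :
    ∃ V ∈ 𝓝 y₀, ∀ᶠ j in atTop, x j ∈ V → range (inclA X A x a j) ⊆ U := by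
  have hval : IsInducing (Subtype.val : ShrAdj X A x a → ∀ k, FinAdj X A x a k) :=
    IsInducing.subtypeVal
  obtain ⟨U', hU', hU'U⟩ := mem_comap.1 ((hval.nhds_eq_comap _).ge hU)
  obtain ⟨N, C, hC, hCU'⟩ := exists_nhds_forall_eq_of_le_mem hU'
  have hinclX : Continuous fun z => (inclX X A x a z).1 :=
    continuous_subtype_val.comp (inclX X A x a).continuous
  refine ⟨_, hinclX.continuousAt.preimage_mem_nhds hC, eventually_gt_atTop N.succ |>.mono ?_⟩
  rintro j hj hxj _ ⟨b, rfl⟩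
  exact hU'U <| hCU' _ hxj _ fun m hm => inclA_apply_of_le (by omega) b

theorem tendsto_iUnion_image_inclA_smallSets {y₀ : X} {v : ℕ → X}
    (hv : Tendsto v atTop (𝓝 y₀)) {S : ∀ j, ℕ → Set (A j)}
    (hS : ∀ j, Tendsto (S j) atTop (𝓝 (a j)).smallSets) :
    Tendsto (fun k => ⋃ j, ⋃ (_ : v k = x j), inclA X A x a j '' S j k) atTop
      (𝓝 (inclX X A x a y₀)).smallSets := by
  rw [tendsto_smallSets_iff]
  intro U hU
  obtain ⟨O, hOU, hO, hy₀O⟩ := mem_nhds_iff.1 hU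
  obtain ⟨V, hV, hJ⟩ := exists_nhds_eventually_range_inclA_subset (hO.mem_nhds hy₀O)
  obtain ⟨J, hJ⟩ := eventually_atTop.1 hJ
  have hlarge : ∀ᶠ k in atTop, ∀ j ≥ J, v k = x j → inclA X A x a j '' S j k ⊆ O :=
    (hv.eventually_mem hV).mono fun k hk j hj hvk => (image_subset_range _ _).trans (hJ j hj (hvk ▸ hk))
  have hsmall : ∀ᶠ k in atTop, ∀ j ∈ Iio J, v k = x j → inclA X A x a j '' S j k ⊆ O := by
    refine (eventually_all_finite (finite_Iio J)).2 fun j _ => ?_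
    by_cases hxj : inclX X A x a (x j) ∈ O
    · have hpre : inclA X A x a j ⁻¹' O ∈ 𝓝 (a j) :=
        (inclA X A x a j).continuous.continuousAt.preimage_mem_nhds
          (hO.mem_nhds (by rwa [inclA_basepoint]))
      exact (tendsto_smallSets_iff.1 (hS j) _ hpre).mono fun k hk _ => image_subset_iff.2 hk
    · filter_upwards [((inclX X A x a).continuous.tendsto y₀).comp hv (hO.mem_nhds hy₀O)]
        with k hk hvk
      exact absurd (hvk ▸ hk) hxj
  filter_upwards [hlarge, hsmall] with k hkl hks
  refine iUnion₂_subset fun j hvk => (?_ : _ ⊆ O).trans hOU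
  rcases lt_or_ge j J with hj | hj
  · exact hks j hj hvk
  · exact hkl j hj hvk

end ShrinkingAdjunction

/-- If `(X, y₀)` and every `(A j, a j)` are sequentially 0-connected, then the shrinking
adjunction space `Y = Adj(X, x_j, A_j, a_j)` is sequentially 0-connected at `y₀`. -/
theorem seqZeroConnectedAt_shrAdj (X : Type*) [TopologicalSpace X]
    (A : ℕ → Type*) [∀ j, TopologicalSpace (A j)] (x : ℕ → X) (a : ∀ j, A j)
    (y₀ : X) (hX : SeqZeroConnectedAt X y₀) (hA : ∀ j, SeqZeroConnectedAt (A j) (a j)) :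
    SeqZeroConnectedAt (ShrAdj X A x a) (inclX X A x a y₀) := by
  rw [seqZeroConnectedAt_iff]
  intro u hu
  have hcore : Tendsto (fun k => retrCore X A x a (u k)) atTop (𝓝 y₀) :=
    ((retrCore X A x a).continuous.tendsto _).comp hu
  obtain ⟨β, hβ⟩ := (seqZeroConnectedAt_iff y₀).1 hX _ hcore
  choose γ hγ using fun j => (seqZeroConnectedAt_iff (a j)).1 (hA j) _
    (((retrA X A x a j).continuous.tendsto _).comp hu)
  choose α hα using fun k => exists_path_range_subset y₀ (u k) (β k) (fun j => γ j k)
  refine ⟨α, Tendsto.smallSets_mono ?_ (Eventually.of_forall hα)⟩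
  exact (((inclX X A x a).continuous.tendsto y₀).image_smallSets.comp hβ).union_smallSets
    (tendsto_iUnion_image_inclA_smallSets hcore hγ)
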